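/- arXiv:2401.16651 — 5 statements merged into one kernel-verified Lean document; each statement's English description precedes it below -/
import Mathlib

section
/- Let P_1,...,P_m be real numbers in [0,1] and q in [0,1]. Define the iteration S^1 = {1,...,m} and S^{t+1} = {i in S^t : P_i ≤ q|S^t|/m}. Then the iteration converges in finitely many steps (in fact within m+1 steps), and the limit set equals {i : P_i ≤ P*}, where P* is the BH threshold: P* = P_(I*) with I* = max{k : P_(k) ≤ kq/m} (the set is empty if no such k exists), where P_(1) ≤ ... ≤ P_(m) are the order statistics. -/
lemma lower_count {m : ℕ} (f : Fin m → ℝ) (hf : Monotone f) (c : ℝ) (j : Fin m) :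
    (j : ℕ) < (Finset.univ.filter (fun k => f k ≤ c)).card ↔ f j ≤ c := by
  constructor
  · intro hj
    by_contra hfj
    have hsub : Finset.univ.filter (fun k => f k ≤ c) ⊆ Finset.Iio j := by
      intro k hk
      simp only [Finset.mem_filter] at hk
      rw [Finset.mem_Iio]
      by_contra hkj
      exact hfj (le_trans (hf (not_lt.mp hkj)) hk.2)
    have := Finset.card_le_card hsub
    rw [Fin.card_Iio] at this
    omega
  · intro hfj
    have hsub : Finset.Iic j ⊆ Finset.univ.filter (fun k => f k ≤ c) := by
      intro k hk
      rw [Finset.mem_Iic] at hk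
      simp only [Finset.mem_filter, Finset.mem_univ, true_and]
      exact le_trans (hf hk) hfj
    have := Finset.card_le_card hsub
    rw [Fin.card_Iic] at this
    omega

lemma filter_perm {m : ℕ} (σ : Equiv.Perm (Fin m)) (p : Fin m → Prop) [DecidablePred p] :
    (Finset.univ.filter (fun k => p (σ k))).image σ = Finset.univ.filter p := by
  ext i
  simp only [Finset.mem_image, Finset.mem_filter, Finset.mem_univ, true_and]
  constructor
  · rintro ⟨k, hk, rfl⟩; exact hk
  · intro hi; exact ⟨σ.symm i, by simpa using hi, by simp⟩

lemma card_perm {m : ℕ} (σ : Equiv.Perm (Fin m)) (p : Fin m → Prop) [DecidablePred p] :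
    (Finset.univ.filter (fun k => p (σ k))).card = (Finset.univ.filter p).card := by
  rw [← filter_perm σ p, Finset.card_image_of_injective _ σ.injective]

open Classical in
/-- The BH procedure as the fixed-point iteration of the BY procedure:
the iteration `S^{t+1} = {i ∈ S^t : P_i ≤ q|S^t|/m}` starting from the full set
converges within `m+1` steps, and the limit equals `{i : P_i ≤ P*}` where `P*`
is the BH threshold determined via the order statistics `P ∘ σ`. -/
theorem stmt_0 (m : ℕ) (hm : 0 < m) (P : Fin m → ℝ) (q : ℝ)
    (hP : ∀ i, P i ∈ Set.Icc (0:ℝ) 1) (hq : q ∈ Set.Icc (0:ℝ) 1)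
    (σ : Equiv.Perm (Fin m)) (hsorted : Monotone (P ∘ σ))
    (S : ℕ → Finset (Fin m))
    (hS0 : S 0 = Finset.univ)
    (hSstep : ∀ t, S (t+1) = (S t).filter (fun i => P i ≤ q * (S t).card / m))
    (Kset : Finset (Fin m))
    (hKset : Kset = Finset.univ.filter (fun k => P (σ k) ≤ ((k : ℕ) + 1) * q / m)) :
    (∀ t, m ≤ t → S t = S m) ∧
    (if h : Kset.Nonempty then
        S m = Finset.univ.filter (fun i => P i ≤ P (σ (Kset.max' h)))
      else S m = ∅) := by
  have hq0 : 0 ≤ q := hq.1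
  have hm' : (0:ℝ) < m := by exact_mod_cast hm
  set f : Fin m → ℝ := P ∘ σ with hf
  -- the iteration is decreasing
  have hsub : ∀ t, S (t+1) ⊆ S t := by
    intro t; rw [hSstep]; exact Finset.filter_subset _ _
  -- invariant: anything below the current threshold is in the current set
  have hJ : ∀ t, ∀ i, P i ≤ q * (S t).card / m → i ∈ S t := by
    intro t
    induction t with
    | zero => intro i _; rw [hS0]; exact Finset.mem_univ i
    | succ t ih =>
      intro i hi
      have hcard : ((S (t+1)).card : ℝ) ≤ ((S t).card : ℝ) := by
        exact_mod_cast Finset.card_le_card (hsub t)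
      have h1 : P i ≤ q * (S t).card / m := le_trans hi (by gcongr)
      rw [hSstep]
      exact Finset.mem_filter.mpr ⟨ih i h1, h1⟩
  -- once fixed, always fixed
  have hfixgen : ∀ t, S (t+1) = S t → ∀ u, t ≤ u → S u = S t := by
    intro t ht u hu
    induction u with
    | zero =>
      have h0 : t = 0 := by omega
      rw [h0]
    | succ u ih =>
      rcases Nat.lt_or_ge t (u+1) with h | h
      · have hu' : t ≤ u := by omega
        have := ih hu'
        rw [hSstep, this, ← hSstep, ht]
      · have : t = u + 1 := by omega
        rw [this]
  -- existence of a fixed point by step m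
  have hdec : ∀ t, S (t+1) ≠ S t → (S (t+1)).card < (S t).card := by
    intro t h
    exact Finset.card_lt_card (lt_of_le_of_ne (hsub t) h)
  have hex : ∃ t, t ≤ m ∧ S (t+1) = S t := by
    by_contra hc
    push_neg at hc
    have key : ∀ t, t ≤ m → (S t).card ≤ m - t := by
      intro t
      induction t with
      | zero => intro _; simp [hS0]
      | succ t ih =>
        intro h
        have h1 := hdec t (hc t (by omega))
        have h2 := ih (by omega)
        omega
    have h0 : (S m).card = 0 := by
      have := key m le_rfl; omega
    rw [Finset.card_eq_zero] at h0
    refine hc m le_rfl ?_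
    rw [hSstep, h0]
    simp
  obtain ⟨t₀, ht₀m, ht₀⟩ := hex
  have hSm : S m = S t₀ := hfixgen t₀ ht₀ m ht₀m
  have goal1 : ∀ t, m ≤ t → S t = S m := by
    intro t ht
    rw [hfixgen t₀ ht₀ t (le_trans ht₀m ht), hSm]
  refine ⟨goal1, ?_⟩
  set T := S t₀ with hT
  set n := T.card with hn
  set c : ℝ := q * n / m with hc
  -- the fixed set is exactly the sublevel set at its own threshold
  have hTeq : T = Finset.univ.filter (fun i => P i ≤ c) := by
    ext i
    simp only [Finset.mem_filter, Finset.mem_univ, true_and]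
    constructor
    · intro hi
      rw [← ht₀, hSstep] at hi
      exact (Finset.mem_filter.mp hi).2
    · intro hi
      exact hJ t₀ i hi
  have hcount : (Finset.univ.filter (fun k => f k ≤ c)).card = n := by
    have h2 : (Finset.univ.filter (fun k => P (σ k) ≤ c)).card
        = (Finset.univ.filter (fun i => P i ≤ c)).card := card_perm σ (fun i => P i ≤ c)
    rw [← hTeq] at h2
    exact h2
  have hnm : n ≤ m := by
    have := Finset.card_le_card (Finset.subset_univ T)
    simpa using this
  have hmemKset : ∀ j : Fin m, j ∈ Kset ↔ P (σ j) ≤ (((j : ℕ) : ℝ) + 1) * q / m := by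
    intro j
    rw [hKset]
    simp
  -- if the fixed set is nonempty, its top index is in Kset
  have htop : 1 ≤ n → (⟨n - 1, by omega⟩ : Fin m) ∈ Kset := by
    intro h1
    have hlt : ((⟨n - 1, by omega⟩ : Fin m) : ℕ)
        < (Finset.univ.filter (fun k => f k ≤ c)).card := by
      simp only [Fin.val_mk]
      omega
    have hfle := (lower_count f hsorted c _).mp hlt
    rw [hmemKset]
    simp only [Fin.val_mk]
    have hcast : ((n - 1 : ℕ) : ℝ) + 1 = (n : ℝ) := by
      push_cast [h1]
      ring
    rw [hcast]
    calc P (σ ⟨n - 1, by omega⟩) = f ⟨n - 1, by omega⟩ := rfl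
      _ ≤ c := hfle
      _ = (n : ℝ) * q / m := by
          show q * (n : ℝ) / m = (n : ℝ) * q / m
          ring
  by_cases h : Kset.Nonempty
  · rw [dif_pos h]
    set K := Kset.max' h with hK
    have hKmem : f K ≤ (((K : ℕ) : ℝ) + 1) * q / m :=
      (hmemKset K).mp (Kset.max'_mem h)
    -- invariant: the set always contains at least K+1 elements
    have hlb : ∀ t, (K : ℕ) + 1 ≤ (S t).card := by
      intro t
      induction t with
      | zero => rw [hS0]; simp
      | succ t ih =>
        have hsubK : (Finset.Iic K).image σ ⊆ S (t+1) := by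
          intro i hi
          simp only [Finset.mem_image, Finset.mem_Iic] at hi
          obtain ⟨j, hj, rfl⟩ := hi
          have hfj : P (σ j) ≤ q * (S t).card / m := by
            calc P (σ j) = f j := rfl
              _ ≤ f K := hsorted hj
              _ ≤ (((K : ℕ) : ℝ) + 1) * q / m := hKmem
              _ ≤ q * (S t).card / m := by
                  rw [div_le_div_iff₀ hm' hm']
                  have hK1 : (((K : ℕ) : ℝ) + 1) ≤ ((S t).card : ℝ) := by
                    exact_mod_cast ih
                  nlinarith [mul_nonneg (mul_nonneg hq0 (sub_nonneg.mpr hK1)) hm'.le]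
          rw [hSstep]
          exact Finset.mem_filter.mpr ⟨hJ t _ hfj, hfj⟩
        have := Finset.card_le_card hsubK
        rw [Finset.card_image_of_injective _ σ.injective, Fin.card_Iic] at this
        omega
    have hnK : n = (K : ℕ) + 1 := by
      have h1 : (K : ℕ) + 1 ≤ n := hlb t₀
      have h2 : n ≤ (K : ℕ) + 1 := by
        have h1n : 1 ≤ n := by omega
        have hmem := htop h1n
        have hle : (⟨n - 1, by omega⟩ : Fin m) ≤ K := Kset.le_max' _ hmem
        have h3 : n - 1 ≤ (K : ℕ) := hle
        omega
      omega
    have hfKc : f K ≤ c := by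
      refine le_trans hKmem ?_
      show (((K : ℕ) : ℝ) + 1) * q / m ≤ q * (n : ℝ) / m
      have hcast : ((n : ℕ) : ℝ) = ((K : ℕ) : ℝ) + 1 := by
        rw [hnK]
        push_cast
        ring
      rw [hcast]
      apply le_of_eq
      ring
    -- the two sublevel sets on the f-side coincide
    have hfeq : Finset.univ.filter (fun k => f k ≤ f K)
        = Finset.univ.filter (fun k => f k ≤ c) := by
      apply Finset.eq_of_subset_of_card_le
      · intro k hk
        simp only [Finset.mem_filter, Finset.mem_univ, true_and] at *
        exact le_trans hk hfKc
      · rw [hcount]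
        have hsubK : Finset.Iic K ⊆ Finset.univ.filter (fun k => f k ≤ f K) := by
          intro j hj
          rw [Finset.mem_Iic] at hj
          simp only [Finset.mem_filter, Finset.mem_univ, true_and]
          exact hsorted hj
        have := Finset.card_le_card hsubK
        rw [Fin.card_Iic] at this
        omega
    rw [← hSm] at hTeq
    rw [hTeq]
    ext i
    simp only [Finset.mem_filter, Finset.mem_univ, true_and]
    constructor
    · intro hi
      have h1 : σ.symm i ∈ Finset.univ.filter (fun k => f k ≤ c) := by
        simp only [Finset.mem_filter, Finset.mem_univ, true_and, hf,
          Function.comp_apply, Equiv.apply_symm_apply]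
        exact hi
      rw [← hfeq] at h1
      simp only [Finset.mem_filter, Finset.mem_univ, true_and, hf,
        Function.comp_apply, Equiv.apply_symm_apply] at h1
      exact h1
    · intro hi
      exact le_trans hi hfKc
  · rw [dif_neg h]
    rw [← hSm] at hTeq
    by_contra hne
    have hnz : 1 ≤ n := by
      rcases Nat.eq_zero_or_pos n with h0 | h1
      · exact absurd (by rw [hSm, ← Finset.card_eq_zero, ← hn]; exact h0) hne
      · exact h1
    exact h ⟨_, htop hnz⟩
end

section
/- Let f_1,...,f_k : {0,1}^m → {0,1}^m each be contracting (f_c(S) ⪯ S) and increasing (S ⪯ S' implies f_c(S) ⪯ f_c(S')). Define the parallel map g_par(S) = ∧_{c=1}^k f_c(S) (coordinatewise minimum) and the sequential map g_seq = f_k ∘ ... ∘ f_1. Then starting from the same initial set S^1, the fixed-point iterations of g_par and g_seq converge to the same limit set. -/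
private lemma my_foldl_subset {m : ℕ} (L : List (Finset (Fin m) → Finset (Fin m)))
    (h : ∀ g ∈ L, ∀ A, g A ⊆ A) (A : Finset (Fin m)) :
    L.foldl (fun B g => g B) A ⊆ A := by
  induction L generalizing A with
  | nil => simp
  | cons g L ih =>
    exact (ih (fun g' hg' => h g' (List.mem_cons_of_mem _ hg')) (g A)).trans
      (h g (List.mem_cons_self) A)

private lemma my_foldl_mono {m : ℕ} (L : List (Finset (Fin m) → Finset (Fin m)))
    (h : ∀ g ∈ L, ∀ A B : Finset (Fin m), A ⊆ B → g A ⊆ g B) {A B : Finset (Fin m)}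
    (hAB : A ⊆ B) : L.foldl (fun B g => g B) A ⊆ L.foldl (fun B g => g B) B := by
  induction L generalizing A B with
  | nil => simpa
  | cons g L ih =>
    exact ih (fun g' hg' => h g' (List.mem_cons_of_mem _ hg'))
      (h g (List.mem_cons_self) _ _ hAB)

private lemma my_foldl_fixed {m : ℕ} (L : List (Finset (Fin m) → Finset (Fin m)))
    {A : Finset (Fin m)} (h : ∀ g ∈ L, g A = A) :
    L.foldl (fun B g => g B) A = A := by
  induction L with
  | nil => rfl
  | cons g L ih =>
    rw [List.foldl_cons, h g (List.mem_cons_self)]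
    exact ih (fun g' hg' => h g' (List.mem_cons_of_mem _ hg'))

private lemma my_foldl_eq_forall {m : ℕ} (L : List (Finset (Fin m) → Finset (Fin m)))
    (hc : ∀ g ∈ L, ∀ A, g A ⊆ A) {A : Finset (Fin m)}
    (h : L.foldl (fun B g => g B) A = A) : ∀ g ∈ L, g A = A := by
  induction L with
  | nil => simp
  | cons g L ih =>
    have hc' : ∀ g' ∈ L, ∀ A, g' A ⊆ A := fun g' hg' => hc g' (List.mem_cons_of_mem _ hg')
    have h1 : g A = A := by
      refine subset_antisymm (hc g (List.mem_cons_self) A) ?_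
      calc A = L.foldl (fun B g => g B) (g A) := h.symm
        _ ⊆ g A := my_foldl_subset L hc' (g A)
    have h2 : L.foldl (fun B g => g B) A = A := by
      have : L.foldl (fun B g => g B) (g A) = A := h
      rwa [h1] at this
    intro g' hg'
    rcases List.mem_cons.mp hg' with rfl | hg'
    · exact h1
    · exact ih hc' h2 g' hg'

private lemma my_iterate_subset {m : ℕ} (g : Finset (Fin m) → Finset (Fin m))
    (hc : ∀ A, g A ⊆ A) (n : ℕ) (A : Finset (Fin m)) : g^[n] A ⊆ A := by
  induction n with
  | zero => simp
  | succ n ih =>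
    rw [Function.iterate_succ_apply']
    exact (hc _).trans ih

private lemma my_iterate_fixed {m : ℕ} (g : Finset (Fin m) → Finset (Fin m))
    (hc : ∀ A, g A ⊆ A) (S : Finset (Fin m)) :
    g (g^[m+1] S) = g^[m+1] S := by
  by_cases hstab : ∃ n ≤ m, g (g^[n] S) = g^[n] S
  · obtain ⟨n, hn, hfix⟩ := hstab
    have heq : g^[m+1] S = g^[n] S := by
      have h2 := Function.iterate_fixed hfix (m+1-n)
      calc g^[m+1] S = g^[m+1-n] (g^[n] S) := by
            rw [← Function.iterate_add_apply]; congr 1; omega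
        _ = g^[n] S := h2
    rw [heq, hfix]
  · push_neg at hstab
    have key : ∀ n, n ≤ m + 1 → (g^[n] S).card + n ≤ S.card := by
      intro n hn
      induction n with
      | zero => simp
      | succ n ih =>
        have hlt : (g^[n+1] S).card < (g^[n] S).card := by
          apply Finset.card_lt_card
          rw [Function.iterate_succ_apply']
          exact ssubset_of_subset_of_ne (hc _) (hstab n (by omega))
        have := ih (by omega)
        omega
    have h1 := key (m+1) le_rfl
    have h2 : S.card ≤ m := by
      simpa using Finset.card_le_univ S
    omega

/-- Parallel intersection and sequential composition of contracting, increasing maps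
converge to the same limit when iterated from a common initial set. -/
theorem stmt_3 (m k : ℕ) (hk : 0 < k) (f : Fin k → Finset (Fin m) → Finset (Fin m))
    (hcontract : ∀ c A, f c A ⊆ A)
    (hmono : ∀ c (A B : Finset (Fin m)), A ⊆ B → f c A ⊆ f c B)
    (gpar gseq : Finset (Fin m) → Finset (Fin m))
    (hgpar : ∀ A, gpar A = Finset.univ.inf (fun c => f c A))
    (hgseq : ∀ A, gseq A = (List.ofFn f).foldl (fun B g => g B) A)
    (S1 : Finset (Fin m)) :
    gpar^[m + 1] S1 = gseq^[m + 1] S1 := by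
  have hmemOf : ∀ g ∈ List.ofFn f, ∃ c, f c = g := by
    intro g hg
    rw [List.mem_ofFn] at hg
    exact hg
  have hLc : ∀ g ∈ List.ofFn f, ∀ A, g A ⊆ A := by
    intro g hg A; obtain ⟨c, rfl⟩ := hmemOf g hg; exact hcontract c A
  have hLm : ∀ g ∈ List.ofFn f, ∀ A B : Finset (Fin m), A ⊆ B → g A ⊆ g B := by
    intro g hg A B hAB; obtain ⟨c, rfl⟩ := hmemOf g hg; exact hmono c A B hAB
  have hgparc : ∀ A, gpar A ⊆ A := by
    intro A
    rw [hgpar]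
    have h1 : Finset.univ.inf (fun c => f c A) ≤ f (⟨0, hk⟩ : Fin k) A :=
      Finset.inf_le (Finset.mem_univ _)
    exact h1.trans (hcontract _ A)
  have hgseqc : ∀ A, gseq A ⊆ A := by
    intro A; rw [hgseq]; exact my_foldl_subset _ hLc A
  have hgparm : Monotone gpar := by
    intro A B hAB
    rw [hgpar, hgpar]
    exact Finset.le_inf fun c _ => (Finset.inf_le (Finset.mem_univ c)).trans
      (hmono c A B hAB)
  have hgseqm : Monotone gseq := by
    intro A B hAB
    rw [hgseq, hgseq]
    exact my_foldl_mono _ hLm hAB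
  set P := gpar^[m+1] S1 with hP
  set Q := gseq^[m+1] S1 with hQ
  have hPfix : gpar P = P := my_iterate_fixed gpar hgparc S1
  have hQfix : gseq Q = Q := my_iterate_fixed gseq hgseqc S1
  -- each f c fixes P
  have hPc : ∀ c, f c P = P := by
    intro c
    refine subset_antisymm (hcontract c P) ?_
    have h2 : gpar P ≤ f c P := by
      rw [hgpar]; exact Finset.inf_le (Finset.mem_univ c)
    rw [hPfix] at h2
    exact h2
  -- each f c fixes Q
  have hQc : ∀ c, f c Q = Q := by
    intro c
    have h := my_foldl_eq_forall (List.ofFn f) hLc (A := Q) (by rw [← hgseq]; exact hQfix)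
    exact h (f c) (List.mem_ofFn.mpr ⟨c, rfl⟩)
  have hPseq : gseq P = P := by
    rw [hgseq]
    exact my_foldl_fixed _ (fun g hg => by obtain ⟨c, rfl⟩ := hmemOf g hg; exact hPc c)
  have hQpar : gpar Q = Q := by
    rw [hgpar]
    refine le_antisymm ((Finset.inf_le (Finset.mem_univ (⟨0, hk⟩ : Fin k))).trans (hQc _).le) ?_
    exact Finset.le_inf fun c _ => (hQc c).ge
  have hPS1 : P ⊆ S1 := my_iterate_subset gpar hgparc _ S1
  have hQS1 : Q ⊆ S1 := my_iterate_subset gseq hgseqc _ S1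
  refine subset_antisymm ?_ ?_
  · calc P = gseq^[m+1] P := (Function.iterate_fixed hPseq (m+1)).symm
      _ ⊆ gseq^[m+1] S1 := hgseqm.iterate (m+1) hPS1
  · calc Q = gpar^[m+1] Q := (Function.iterate_fixed hQpar (m+1)).symm
      _ ⊆ gpar^[m+1] S1 := hgparm.iterate (m+1) hQS1
end

section
/- Let ℓ : [0,1] → [0,1] be a nondecreasing function with ℓ(0) = 0, and let K be a random variable taking values in {0,1,...,m}. Then E[ 1_{K ≥ 1} · ℓ(K q̃) / K ] ≤ q̃ · (sum_{j=1}^m 1/j) whenever ℓ(j q̃) ≤ j q̃ for all j = 1,...,m and q̃ ≥ 0. More precisely, the deterministic inequality holds: for every k in {1,...,m}, ℓ(k q̃)/k = sum_{j=1}^k (ℓ(j q̃) − ℓ((j−1) q̃))/k ≤ sum_{j=1}^m (ℓ(j q̃) − ℓ((j−1) q̃))/j, and the right-hand side in expectation is at most q̃ sum_{j=1}^{m} 1/j by summation by parts. -/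
open MeasureTheory

/-- The telescoping inequality behind FDR control under arbitrary dependence: for a
nondecreasing loss profile `ℓ` with `ℓ 0 = 0` and `ℓ(j q̃) ≤ j q̃`, the deterministic
bound `ℓ(k q̃)/k ≤ ∑_{j=1}^m (ℓ(j q̃) − ℓ((j−1) q̃))/j` holds, and consequently the
expectation of `1_{K ≥ 1} ℓ(K q̃)/K` is at most `q̃ ∑_{j=1}^m 1/j`. -/
theorem stmt_6 {Ω : Type*} [MeasurableSpace Ω] (μ : Measure Ω) [IsProbabilityMeasure μ]
    (m : ℕ) (hm : 0 < m) (ℓ : ℝ → ℝ) (qt : ℝ)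
    (hmono : ∀ x y : ℝ, 0 ≤ x → x ≤ y → ℓ x ≤ ℓ y)
    (hℓ0 : ℓ 0 = 0) (hqt : 0 ≤ qt)
    (hrisk : ∀ j : ℕ, 1 ≤ j → j ≤ m → ℓ (j * qt) ≤ j * qt)
    (K : Ω → ℕ) (hK : ∀ ω, K ω ≤ m) (hKmeas : Measurable K) :
    (∀ k : ℕ, 1 ≤ k → k ≤ m →
      ℓ (k * qt) / k ≤ ∑ j ∈ Finset.Icc 1 m, (ℓ (j * qt) - ℓ ((j - 1 : ℝ) * qt)) / j) ∧
    ∫ ω, (if 1 ≤ K ω then ℓ ((K ω : ℝ) * qt) / (K ω : ℝ) else 0) ∂μ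
      ≤ qt * ∑ j ∈ Finset.Icc 1 m, (1 : ℝ) / j := by
  set Δ : ℕ → ℝ := fun j => ℓ (j * qt) - ℓ ((j - 1 : ℝ) * qt) with hΔ
  have hℓnn : ∀ j : ℕ, 0 ≤ ℓ ((j : ℝ) * qt) := by
    intro j
    have := hmono 0 ((j : ℝ) * qt) le_rfl (by positivity)
    simpa [hℓ0] using this
  have hΔnn : ∀ j : ℕ, 1 ≤ j → 0 ≤ Δ j := by
    intro j hj
    have h1 : (1 : ℝ) ≤ (j : ℝ) := by exact_mod_cast hj
    have h0 : (0 : ℝ) ≤ ((j : ℝ) - 1) * qt := by nlinarith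
    have := hmono (((j : ℝ) - 1) * qt) ((j : ℝ) * qt) h0 (by nlinarith)
    simp only [hΔ]
    linarith
  have tel : ∀ k : ℕ, ∑ j ∈ Finset.Icc 1 k, Δ j = ℓ ((k : ℝ) * qt) := by
    intro k
    induction k with
    | zero => simp [hℓ0]
    | succ n ih =>
        rw [Finset.sum_Icc_succ_top (by omega), ih]
        have hc : ((n + 1 : ℕ) : ℝ) - 1 = (n : ℝ) := by push_cast; ring
        simp only [hΔ, hc]
        ring
  -- Part 1
  have part1 : ∀ k : ℕ, 1 ≤ k → k ≤ m →
      ℓ ((k : ℝ) * qt) / k ≤ ∑ j ∈ Finset.Icc 1 m, Δ j / j := by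
    intro k hk hkm
    have hkpos : (0 : ℝ) < (k : ℝ) := by exact_mod_cast hk
    calc ℓ ((k : ℝ) * qt) / k = ∑ j ∈ Finset.Icc 1 k, Δ j / k := by
          rw [← Finset.sum_div, tel]
      _ ≤ ∑ j ∈ Finset.Icc 1 k, Δ j / j := by
          apply Finset.sum_le_sum
          intro j hj
          rw [Finset.mem_Icc] at hj
          have hjpos : (0 : ℝ) < (j : ℝ) := by exact_mod_cast hj.1
          have hjk : (j : ℝ) ≤ (k : ℝ) := by exact_mod_cast hj.2
          exact div_le_div_of_nonneg_left (hΔnn j hj.1) hjpos hjk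
      _ ≤ ∑ j ∈ Finset.Icc 1 m, Δ j / j := by
          apply Finset.sum_le_sum_of_subset_of_nonneg
          · exact Finset.Icc_subset_Icc_right hkm
          · intro j hj _
            rw [Finset.mem_Icc] at hj
            have hjpos : (0 : ℝ) < (j : ℝ) := by exact_mod_cast hj.1
            exact div_nonneg (hΔnn j hj.1) hjpos.le
  -- Key Abel-summation bound
  have key : ∀ n : ℕ, 1 ≤ n → n ≤ m →
      ∑ j ∈ Finset.Icc 1 n, Δ j / j
        ≤ qt * ∑ j ∈ Finset.Icc 1 n, (1 : ℝ) / j - qt + ℓ ((n : ℝ) * qt) / n := by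
    intro n hn
    induction n, hn using Nat.le_induction with
    | base =>
        intro _
        have : Δ 1 = ℓ (1 * qt) := by
          simp [hΔ, hℓ0]
        simp [this]
    | succ n hn ih =>
        intro hnm
        have ihh := ih (by omega)
        have hnpos : (0 : ℝ) < (n : ℝ) := by exact_mod_cast hn
        have hn1pos : (0 : ℝ) < (n : ℝ) + 1 := by linarith
        have han : ℓ ((n : ℝ) * qt) ≤ (n : ℝ) * qt := hrisk n hn (by omega)
        have hc : ((n + 1 : ℕ) : ℝ) - 1 = (n : ℝ) := by push_cast; ring
        have hΔn1 : Δ (n + 1) = ℓ (((n : ℝ) + 1) * qt) - ℓ ((n : ℝ) * qt) := by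
          simp only [hΔ, hc]; push_cast; norm_num
        rw [Finset.sum_Icc_succ_top (by omega), Finset.sum_Icc_succ_top (by omega), hΔn1]
        push_cast
        have e1 : ℓ ((n : ℝ) * qt) / n - ℓ ((n : ℝ) * qt) / ((n : ℝ) + 1)
            ≤ qt / ((n : ℝ) + 1) := by
          rw [div_sub_div _ _ hnpos.ne' hn1pos.ne', div_le_div_iff₀ (by positivity) hn1pos]
          have h0 : 0 ≤ ℓ ((n : ℝ) * qt) := hℓnn n
          nlinarith
        have e2 : (ℓ (((n : ℝ) + 1) * qt) - ℓ ((n : ℝ) * qt)) / ((n : ℝ) + 1)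
            = ℓ (((n : ℝ) + 1) * qt) / ((n : ℝ) + 1) - ℓ ((n : ℝ) * qt) / ((n : ℝ) + 1) := by
          ring
        rw [e2]
        have e3 : qt * (∑ k ∈ Finset.Icc 1 n, 1 / (k : ℝ) + 1 / ((n : ℝ) + 1))
            = qt * ∑ k ∈ Finset.Icc 1 n, 1 / (k : ℝ) + qt / ((n : ℝ) + 1) := by ring
        linarith [ihh, e1, e3]
  have hSm : ∑ j ∈ Finset.Icc 1 m, Δ j / j ≤ qt * ∑ j ∈ Finset.Icc 1 m, (1 : ℝ) / j := by
    have h1 := key m hm le_rfl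
    have hmpos : (0 : ℝ) < (m : ℝ) := by exact_mod_cast hm
    have ham : ℓ ((m : ℝ) * qt) ≤ (m : ℝ) * qt := hrisk m hm le_rfl
    have : ℓ ((m : ℝ) * qt) / m ≤ qt := by
      rw [div_le_iff₀ hmpos]; nlinarith
    linarith
  constructor
  · exact part1
  · have hfle : ∀ ω, (if 1 ≤ K ω then ℓ ((K ω : ℝ) * qt) / (K ω : ℝ) else 0)
        ≤ ∑ j ∈ Finset.Icc 1 m, Δ j / j := by
      intro ω
      by_cases h : 1 ≤ K ω
      · simp only [h, if_true]
        exact part1 (K ω) h (hK ω)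
      · simp only [h, if_false]
        apply Finset.sum_nonneg
        intro j hj
        rw [Finset.mem_Icc] at hj
        have hjpos : (0 : ℝ) < (j : ℝ) := by exact_mod_cast hj.1
        exact div_nonneg (hΔnn j hj.1) hjpos.le
    have hfnn : ∀ ω, 0 ≤ (if 1 ≤ K ω then ℓ ((K ω : ℝ) * qt) / (K ω : ℝ) else 0) := by
      intro ω
      by_cases h : 1 ≤ K ω
      · simp only [h, if_true]
        have : (0 : ℝ) < (K ω : ℝ) := by exact_mod_cast h
        exact div_nonneg (hℓnn (K ω)) this.le
      · simp [h]
    calc ∫ ω, (if 1 ≤ K ω then ℓ ((K ω : ℝ) * qt) / (K ω : ℝ) else 0) ∂μ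
        ≤ ∫ _, (∑ j ∈ Finset.Icc 1 m, Δ j / j) ∂μ := by
          apply integral_mono_of_nonneg
          · exact Filter.Eventually.of_forall hfnn
          · exact integrable_const _
          · exact Filter.Eventually.of_forall hfle
      _ = ∑ j ∈ Finset.Icc 1 m, Δ j / j := by simp
      _ ≤ qt * ∑ j ∈ Finset.Icc 1 m, (1 : ℝ) / j := hSm
end

section
/- Let p_i : ℝ × I → [0,1] be p-value functions, q : I → (0,1] a target level curve, and define the adjusted statistic P_{i,sup} = sup_{c ∈ I} p_i(x_i; c)/q(c). Fix a rejection set S. Then for any realization, sup_{c ∈ I} [ (sum_{i : H_{i,c} true, i ∈ S} 1) / (q(c)·(1 ∨ |S|)) ] ≤ sum over i with c_i* defined of 1_{i ∈ S, p_i(x_i; c_i*) ≤ q(c_i*)|S|/m} / (q(c_i*)·(1 ∨ |S|)), where c_i* = argmin{q(c) : H_{i,c} true} and provided that every i ∈ S satisfies P_{i,sup} ≤ |S|/m. In words: the supremum over c of the per-c false discovery proportion divided by q(c) is bounded by a sum of per-index indicator terms, each requiring p_i(x_i; c_i*) ≤ q(c_i*)|S|/m. -/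
open Classical in
/-- The key deterministic bound for FDR-curve control: if every selected index `i ∈ S`
satisfies `p_i(x_i;c)/q(c) ≤ |S|/m` for all `c ∈ I`, then for every `c ∈ I` the per-`c`
false discovery proportion divided by `q(c)` is bounded by the sum over indices `i`
(for which `c_i* = argmin{q(c) : θ_i ≥ c}` exists) of
`1_{i ∈ S, p_i(x_i;c_i*) ≤ q(c_i*)|S|/m} / (q(c_i*)(1 ∨ |S|))`. -/
theorem stmt_12 (m : ℕ) (hm : 0 < m) (I : Set ℝ) (θ : Fin m → ℝ)
    (p : Fin m → ℝ → ℝ) (q : ℝ → ℝ)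
    (hp : ∀ i c, c ∈ I → p i c ∈ Set.Icc (0:ℝ) 1)
    (hqpos : ∀ c, c ∈ I → 0 < q c) (hq1 : ∀ c, c ∈ I → q c ≤ 1)
    (S : Finset (Fin m))
    (cstar : Fin m → ℝ)
    (hcstar : ∀ i : Fin m, (∃ c ∈ I, c ≤ θ i) →
      cstar i ∈ I ∧ cstar i ≤ θ i ∧ ∀ c ∈ I, c ≤ θ i → q (cstar i) ≤ q c)
    (hsel : ∀ i ∈ S, ∀ c ∈ I, p i c / q c ≤ (S.card : ℝ) / m) :
    ∀ c ∈ I,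
      ((S.filter (fun i => c ≤ θ i)).card : ℝ) / (q c * max 1 (S.card : ℝ))
        ≤ ∑ i ∈ Finset.univ.filter (fun i : Fin m => ∃ c' ∈ I, c' ≤ θ i),
            (if i ∈ S ∧ p i (cstar i) ≤ q (cstar i) * S.card / m then (1:ℝ) else 0)
              / (q (cstar i) * max 1 (S.card : ℝ)) := by
  intro c hc
  have hM : (0:ℝ) < max 1 (S.card : ℝ) := lt_of_lt_of_le one_pos (le_max_left _ _)
  have hqc := hqpos c hc
  set T := S.filter (fun i => c ≤ θ i) with hT
  have hTsub : T ⊆ Finset.univ.filter (fun i : Fin m => ∃ c' ∈ I, c' ≤ θ i) := by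
    intro i hi
    rw [hT, Finset.mem_filter] at hi
    exact Finset.mem_filter.2 ⟨Finset.mem_univ _, ⟨c, hc, hi.2⟩⟩
  have hLHS : ((T.card : ℝ)) / (q c * max 1 (S.card : ℝ))
      = ∑ i ∈ T, (1:ℝ) / (q c * max 1 (S.card : ℝ)) := by
    rw [Finset.sum_const, nsmul_eq_mul, mul_one_div]
  rw [hLHS]
  refine le_trans (Finset.sum_le_sum ?_)
    (Finset.sum_le_sum_of_subset_of_nonneg hTsub ?_)
  · intro i hi
    rw [hT, Finset.mem_filter] at hi
    obtain ⟨hiS, hiθ⟩ := hi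
    obtain ⟨hcI, hcθ, hmin⟩ := hcstar i ⟨c, hc, hiθ⟩
    have hqi := hqpos _ hcI
    have hps := hsel i hiS _ hcI
    have hpc : p i (cstar i) ≤ q (cstar i) * S.card / m := by
      rw [div_le_iff₀ hqi] at hps
      calc p i (cstar i) ≤ (S.card : ℝ) / m * q (cstar i) := hps
        _ = q (cstar i) * S.card / m := by ring
    rw [if_pos ⟨hiS, hpc⟩]
    apply one_div_le_one_div_of_le (by positivity)
    exact mul_le_mul_of_nonneg_right (hmin c hc hiθ) hM.le
  · intro i hi _
    rw [Finset.mem_filter] at hi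
    obtain ⟨hcI, -, -⟩ := hcstar i hi.2
    have hqi := hqpos _ hcI
    split
    · positivity
    · rw [zero_div]
end

section
/- Let s : X → {0,1}^m be a stable selection rule and s' : {0,1}^m × X → {0,1}^m an extended selection rule with s'(w, x) ⪯ w for all w, that is stable, where stability of s means: for all i and any x, x' agreeing outside coordinate i, if s_i(x) = s_i(x') = 1 then s(x) = s(x'); and stability of s' means the same for each s'(w, ·). Then the composition s'' defined by s''(x) = s'(s(x), x) is stable: for x, x' agreeing outside coordinate i with s''_i(x) = s''_i(x') = 1, we have s''(x) = s''(x'). -/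
/-- Composition of stable selection rules is stable: if `s` is a stable selection rule
and `s'` is a stable extended selection rule with `s'(w, x) ⪯ w`, then
`s''(x) = s'(s(x), x)` is stable. -/
theorem stmt_19 {m : ℕ} {α : Fin m → Type*}
    (s : (∀ i, α i) → Fin m → Bool)
    (s' : (Fin m → Bool) → (∀ i, α i) → Fin m → Bool)
    (hcontract : ∀ w x i, s' w x i = true → w i = true)
    (hstabs : ∀ (i : Fin m) (x x' : ∀ j, α j),
      (∀ j, j ≠ i → x j = x' j) → s x i = true → s x' i = true → s x = s x')
    (hstabs' : ∀ (w : Fin m → Bool) (i : Fin m) (x x' : ∀ j, α j),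
      (∀ j, j ≠ i → x j = x' j) → s' w x i = true → s' w x' i = true →
        s' w x = s' w x')
    (s'' : (∀ i, α i) → Fin m → Bool)
    (hs'' : ∀ x, s'' x = s' (s x) x) :
    ∀ (i : Fin m) (x x' : ∀ j, α j),
      (∀ j, j ≠ i → x j = x' j) → s'' x i = true → s'' x' i = true →
        s'' x = s'' x' := by
  intro i x x' hagree hx hx'
  rw [hs''] at hx hx'
  have hsx : s x = s x' :=
    hstabs i x x' hagree (hcontract _ _ _ hx) (hcontract _ _ _ hx')
  rw [hs'', hs'', hsx]
  exact hstabs' (s x') i x x' hagree (hsx ▸ hx) hx'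
end
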